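/- Let μ be the uniform measure on {0,1}^E for a finite set E, and let f, h : {0,1}^E → ℤ be functions with f monotone increasing and h monotone decreasing (coordinatewise). Let g ≥ 0 be an integer with μ(h ≤ f + g) ≥ 0.999 and suppose f and h have the same distribution under μ. Then there is an integer s with μ(s ≤ f ≤ s + g) > 0.9. -/
import Mathlib


open MeasureTheory ProbabilityTheory Finset

section Aux

variable {E : Type*} [Fintype E] [DecidableEq E]

lemma harrisBool (A B : Finset (E → Bool))
    (hA : IsLowerSet (↑A : Set (E → Bool))) (hB : IsUpperSet (↑B : Set (E → Bool))) :
    Fintype.card (E → Bool) * (A ∩ B).card ≤ A.card * B.card := by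
  let φ : Finset E ≃o (E → Bool) :=
    { toFun := fun s i => decide (i ∈ s)
      invFun := fun x => Finset.univ.filter (fun i => x i = true)
      left_inv := by intro s; ext i; simp
      right_inv := by intro x; ext i; simp
      map_rel_iff' := by
        intro s t
        simp [Pi.le_def, Finset.subset_iff, Bool.le_iff_imp, decide_eq_true_iff] }
  let e : (E → Bool) ↪ Finset E := φ.symm.toEquiv.toEmbedding
  have him : ∀ S : Finset (E → Bool), (↑(S.map e) : Set (Finset E)) = ⇑φ ⁻¹' ↑S := by
    intro S
    rw [Finset.coe_map]
    show ⇑φ.symm.toEquiv '' ↑S = _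
    rw [Equiv.image_eq_preimage_symm]
    rfl
  have h𝒜 : IsLowerSet (↑(A.map e) : Set (Finset E)) := by
    rw [him]; exact hA.preimage φ.monotone
  have hℬ : IsUpperSet (↑(B.map e) : Set (Finset E)) := by
    rw [him]; exact hB.preimage φ.monotone
  have := h𝒜.card_inter_le_finset hℬ
  rw [← Finset.map_inter, Finset.card_map, Finset.card_map,
    Finset.card_map] at this
  rwa [Fintype.card_fun, Fintype.card_bool]

lemma unifEq (F : Finset (E → Bool)) :
    uniformOn (Set.univ : Set (E → Bool)) ↑F
      = (F.card : ENNReal) / (Fintype.card (E → Bool)) := by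
  rw [uniformOn, cond_apply MeasurableSet.univ, Set.univ_inter]
  rw [Measure.count_apply_finset, Measure.count_apply_finite _ Set.finite_univ]
  simp [ENNReal.div_eq_inv_mul]

lemma stmt14_aux (f h : (E → Bool) → ℤ)
    (hf : Monotone f) (hh : Antitone h) (g : ℤ) (hg : 0 ≤ g)
    (hident : ∀ k : ℤ,
      uniformOn (Set.univ : Set (E → Bool)) {x | f x ≤ k} =
        uniformOn (Set.univ : Set (E → Bool)) {x | h x ≤ k})
    (hclose : uniformOn (Set.univ : Set (E → Bool)) {x | h x ≤ f x + g} ≥ 999 / 1000) :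
    ∃ s : ℤ, uniformOn (Set.univ : Set (E → Bool)) {x | s ≤ f x ∧ f x ≤ s + g} > 9 / 10 := by
  have hNpos : 0 < Fintype.card (E → Bool) := Fintype.card_pos
  set N := Fintype.card (E → Bool) with hNdef
  have hN0 : (N : ENNReal) ≠ 0 := by exact_mod_cast hNpos.ne'
  have hNt : (N : ENNReal) ≠ ⊤ := ENNReal.natCast_ne_top N
  have unif : ∀ (p : (E → Bool) → Prop) (inst : DecidablePred p),
      uniformOn (Set.univ : Set (E → Bool)) {x | p x}
        = ((Finset.univ.filter p).card : ENNReal) / N := by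
    intro p inst
    rw [show {x | p x} = ↑(Finset.univ.filter p) by ext x; simp]
    exact unifEq _
  -- identical distribution, on the level of cards
  have hident' : ∀ k : ℤ,
      (Finset.univ.filter (fun x : E → Bool => f x ≤ k)).card
        = (Finset.univ.filter (fun x : E → Bool => h x ≤ k)).card := by
    intro k
    have h1 := hident k
    rw [unif (fun x => f x ≤ k) inferInstance, unif (fun x => h x ≤ k) inferInstance] at h1
    have h2 : ((Finset.univ.filter (fun x : E → Bool => f x ≤ k)).card : ENNReal)
        = (Finset.univ.filter (fun x : E → Bool => h x ≤ k)).card := by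
      calc ((Finset.univ.filter (fun x : E → Bool => f x ≤ k)).card : ENNReal)
          = ((Finset.univ.filter (fun x : E → Bool => f x ≤ k)).card : ENNReal) / N * N :=
            (ENNReal.div_mul_cancel hN0 hNt).symm
        _ = ((Finset.univ.filter (fun x : E → Bool => h x ≤ k)).card : ENNReal) / N * N := by
            rw [h1]
        _ = _ := ENNReal.div_mul_cancel hN0 hNt
    exact_mod_cast h2
  -- closeness, real version
  have hclose' : (999 : ℝ) * N
      ≤ 1000 * (Finset.univ.filter (fun x : E → Bool => h x ≤ f x + g)).card := by
    rw [unif (fun x => h x ≤ f x + g) inferInstance] at hclose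
    have hfin : ((Finset.univ.filter (fun x : E → Bool => h x ≤ f x + g)).card : ENNReal) / N
        ≠ ⊤ := (ENNReal.div_lt_top (ENNReal.natCast_ne_top _) hN0).ne
    have h1 := ENNReal.toReal_mono hfin hclose
    rw [ENNReal.toReal_div, ENNReal.toReal_div] at h1
    simp only [ENNReal.toReal_ofNat, ENNReal.toReal_natCast] at h1
    rw [div_le_div_iff₀ (by norm_num) (by exact_mod_cast hNpos)] at h1
    linarith
  -- Harris-type key inequality
  have harris_key : ∀ t : ℤ,
      ((Finset.univ.filter (fun x : E → Bool => f x ≤ t)).card : ℝ)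
          * ((N : ℝ) - (Finset.univ.filter (fun x : E → Bool => f x ≤ t + g)).card)
        ≤ (N : ℝ) * ((N : ℝ)
          - (Finset.univ.filter (fun x : E → Bool => h x ≤ f x + g)).card) := by
    intro t
    set At := Finset.univ.filter (fun x : E → Bool => f x ≤ t) with hAt
    set Btg := Finset.univ.filter (fun x : E → Bool => h x ≤ t + g) with hBtg
    set C := Finset.univ.filter (fun x : E → Bool => h x ≤ f x + g) with hC
    have hsub : At ⊆ (At ∩ Btg) ∪ Cᶜ := by
      intro x hx
      simp only [hAt, Finset.mem_filter, Finset.mem_univ, true_and] at hx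
      by_cases hc : h x ≤ f x + g
      · apply Finset.mem_union_left
        simp only [hAt, hBtg, Finset.mem_inter, Finset.mem_filter, Finset.mem_univ, true_and]
        exact ⟨hx, by omega⟩
      · apply Finset.mem_union_right
        simp only [hC, Finset.mem_compl, Finset.mem_filter, Finset.mem_univ, true_and]
        exact hc
    have step1 : At.card ≤ (At ∩ Btg).card + Cᶜ.card :=
      (Finset.card_le_card hsub).trans (Finset.card_union_le _ _)
    have hAtLower : IsLowerSet (↑At : Set (E → Bool)) := by
      intro x y hle hx
      simp only [hAt, Finset.coe_filter, Set.mem_setOf_eq, Finset.mem_univ, true_and] at hx ⊢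
      exact le_trans (hf hle) hx
    have hBtgUpper : IsUpperSet (↑Btg : Set (E → Bool)) := by
      intro x y hle hx
      simp only [hBtg, Finset.coe_filter, Set.mem_setOf_eq, Finset.mem_univ, true_and] at hx ⊢
      exact le_trans (hh hle) hx
    have step2 : N * (At ∩ Btg).card ≤ At.card * Btg.card :=
      harrisBool At Btg hAtLower hBtgUpper
    have e1 : (At.card : ℝ) ≤ ((At ∩ Btg).card : ℝ) + (Cᶜ.card : ℝ) := by exact_mod_cast step1
    have e2 : (N : ℝ) * ((At ∩ Btg).card : ℝ) ≤ (At.card : ℝ) * (Btg.card : ℝ) := by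
      exact_mod_cast step2
    have e3 : ((Cᶜ).card : ℝ) = (N : ℝ) - (C.card : ℝ) := by
      rw [Finset.card_compl]
      rw [Nat.cast_sub ((Finset.card_le_univ C).trans_eq Finset.card_univ)]
    have e4 : (Btg.card : ℝ)
        = ((Finset.univ.filter (fun x : E → Bool => f x ≤ t + g)).card : ℝ) := by
      exact_mod_cast (hident' (t + g)).symm
    have hNnn : (0 : ℝ) ≤ (N : ℝ) := Nat.cast_nonneg N
    nlinarith [mul_le_mul_of_nonneg_left e1 hNnn, e2, e3, e4]
  -- choose minimal s with μ(f ≤ s) ≥ 0.95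
  have hne : (Finset.univ.image f).Nonempty := by
    simp [Finset.image_nonempty, Finset.univ_nonempty]
  set M := (Finset.univ.image f).max' hne with hM
  set m := (Finset.univ.image f).min' hne with hm
  obtain ⟨s, hPs, hmin⟩ := Int.exists_least_of_bdd
    (P := fun k : ℤ => 19 * N ≤ 20 * (Finset.univ.filter (fun x : E → Bool => f x ≤ k)).card)
    ⟨m, by
      intro z hz
      have hz' : 19 * N ≤ 20 * (Finset.univ.filter (fun x : E → Bool => f x ≤ z)).card := hz
      clear hz
      by_contra hzm
      push_neg at hzm
      have hempty : Finset.univ.filter (fun x : E → Bool => f x ≤ z) = ∅ := by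
        apply Finset.filter_false_of_mem
        intro x _
        have := (Finset.univ.image f).min'_le (f x) (Finset.mem_image_of_mem f (Finset.mem_univ x))
        omega
      rw [hempty] at hz'
      simp at hz'
      omega⟩
    ⟨M, by
      show 19 * N ≤ 20 * (Finset.univ.filter (fun x : E → Bool => f x ≤ M)).card
      have hfull : Finset.univ.filter (fun x : E → Bool => f x ≤ M) = Finset.univ := by
        apply Finset.filter_true_of_mem
        intro x _
        exact (Finset.univ.image f).le_max' (f x) (Finset.mem_image_of_mem f (Finset.mem_univ x))
      rw [hfull, Finset.card_univ]
      omega⟩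
  have hnot : ¬ (19 * N ≤ 20 * (Finset.univ.filter (fun x : E → Bool => f x ≤ s - 1)).card) := by
    intro hp
    have := hmin _ hp
    omega
  push_neg at hnot
  -- final interval
  refine ⟨s - g, ?_⟩
  rw [unif (fun x => s - g ≤ f x ∧ f x ≤ s - g + g) inferInstance]
  set D := Finset.univ.filter (fun x : E → Bool => s - g ≤ f x ∧ f x ≤ s - g + g) with hD
  have hsub2 : Finset.univ.filter (fun x : E → Bool => f x ≤ s - 1 - g)
      ⊆ Finset.univ.filter (fun x : E → Bool => f x ≤ s) := by
    intro x hx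
    simp only [Finset.mem_filter, Finset.mem_univ, true_and] at hx ⊢
    omega
  have hDeq : D = Finset.univ.filter (fun x : E → Bool => f x ≤ s)
      \ Finset.univ.filter (fun x : E → Bool => f x ≤ s - 1 - g) := by
    ext x
    simp only [hD, Finset.mem_filter, Finset.mem_sdiff, Finset.mem_univ, true_and, not_le,
      not_and, not_forall]
    omega
  have hDcard : (D.card : ℝ)
      = ((Finset.univ.filter (fun x : E → Bool => f x ≤ s)).card : ℝ)
        - ((Finset.univ.filter (fun x : E → Bool => f x ≤ s - 1 - g)).card : ℝ) := by
    rw [hDeq, Finset.card_sdiff_of_subset hsub2]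
    rw [Nat.cast_sub (Finset.card_le_card hsub2)]
  -- real arithmetic
  set a : ℝ := ((Finset.univ.filter (fun x : E → Bool => f x ≤ s)).card : ℝ) with haa
  set b : ℝ := ((Finset.univ.filter (fun x : E → Bool => f x ≤ s - 1)).card : ℝ) with hbb
  set c : ℝ := ((Finset.univ.filter (fun x : E → Bool => f x ≤ s - 1 - g)).card : ℝ) with hcc
  set cc : ℝ := ((Finset.univ.filter (fun x : E → Bool => h x ≤ f x + g)).card : ℝ) with hcl
  have hkey := harris_key (s - 1 - g)
  simp only [show s - 1 - g + g = s - 1 from by ring] at hkey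
  have ha : (19 : ℝ) * N ≤ 20 * a := by
    rw [haa]; exact_mod_cast hPs
  have hb : (20 : ℝ) * b < 19 * N := by
    rw [hbb]; exact_mod_cast hnot
  have hn : (0 : ℝ) < N := by exact_mod_cast hNpos
  have hc0 : (0 : ℝ) ≤ c := by rw [hcc]; exact Nat.cast_nonneg _
  have h1 : c * ((N : ℝ) / 20) ≤ c * ((N : ℝ) - b) :=
    mul_le_mul_of_nonneg_left (by linarith) hc0
  have h2 : (N : ℝ) * ((N : ℝ) - cc) ≤ (N : ℝ) * ((N : ℝ) / 1000) :=
    mul_le_mul_of_nonneg_left (by linarith) (le_of_lt hn)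
  have h50 : 50 * c ≤ (N : ℝ) := by
    have h3 : c * ((N : ℝ) / 20) ≤ (N : ℝ) * ((N : ℝ) / 1000) := le_trans h1 (le_trans hkey h2)
    nlinarith
  have hfinal : (9 : ℝ) * N < 10 * (D.card : ℝ) := by
    rw [hDcard]
    linarith [ha, h50, hn]
  -- convert back to ENNReal
  have hDfin : ((D.card : ENNReal)) / N ≠ ⊤ :=
    (ENNReal.div_lt_top (ENNReal.natCast_ne_top _) hN0).ne
  have h910 : ((9 : ENNReal) / 10) ≠ ⊤ := by
    refine (ENNReal.div_lt_top ?_ ?_).ne <;> norm_num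
  rw [gt_iff_lt, ← ENNReal.toReal_lt_toReal h910 hDfin]
  rw [ENNReal.toReal_div, ENNReal.toReal_div]
  simp only [ENNReal.toReal_ofNat, ENNReal.toReal_natCast]
  rw [div_lt_div_iff₀ (by norm_num) hn]
  linarith

end Aux

/-- Abstract form of Proposition 2: for the uniform measure `μ` on `{0,1}^E` (`E` finite), if
`f` is monotone increasing, `h` is monotone decreasing, `f` and `h` have the same distribution,
`g ≥ 0` and `μ(h ≤ f + g) ≥ 0.999`, then some interval `[s, s + g]` contains `f` with
probability more than 0.9. -/
theorem stmt14 {E : Type*} [Fintype E] (f h : (E → Bool) → ℤ)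
    (hf : Monotone f) (hh : Antitone h) (g : ℤ) (hg : 0 ≤ g)
    (hident : ∀ k : ℤ,
      uniformOn (Set.univ : Set (E → Bool)) {x | f x ≤ k} =
        uniformOn (Set.univ : Set (E → Bool)) {x | h x ≤ k})
    (hclose : uniformOn (Set.univ : Set (E → Bool)) {x | h x ≤ f x + g} ≥ 999 / 1000) :
    ∃ s : ℤ, uniformOn (Set.univ : Set (E → Bool)) {x | s ≤ f x ∧ f x ≤ s + g} > 9 / 10 := by
  have := Classical.decEq E
  exact stmt14_aux f h hf hh g hg hident hclose
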